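/- Let 𝒢 be a TVG in class B with bound Δ whose underlying graph is a tree T on vertex set V, let s ∈ V, and let L* be the minimal length of a walk in T starting at s that visits every vertex of T. Then the minimal arrival time OPT of a covering journey from s at time 0 satisfies L* ≤ OPT ≤ Δ·L*. -/

import Mathlib

/-- A time-varying graph (TVG): an underlying simple graph together with a presence
function telling when each (directed rendering of an) edge is available; every edge
takes one time step to cross. -/
structure TVG (V : Type) where
  G : SimpleGraph V
  avail : V → V → ℕ → Prop

namespace TVG

variable {V : Type}

/-- A step of a journey: traverse the edge from `x.1` to `x.2.1`, starting at time
`x.2.2` and arriving at time `x.2.2 + 1`. -/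
abbrev Step (V : Type) := V × V × ℕ

/-- Consecutive steps of a journey: the next step starts where the previous one ended,
at a strictly later time (waiting in between is allowed). -/
def Linked (a b : Step V) : Prop := b.1 = a.2.1 ∧ a.2.2 + 1 ≤ b.2.2

/-- A journey: each step crosses an edge of the underlying graph that is available at
that time, and consecutive steps are linked. -/
def IsJourney (𝒢 : TVG V) (J : List (Step V)) : Prop :=
  (∀ x ∈ J, 𝒢.G.Adj x.1 x.2.1 ∧ 𝒢.avail x.1 x.2.1 x.2.2) ∧ J.Chain' Linked

/-- The journey starts at vertex `u`. -/
def startsAt (J : List (Step V)) (u : V) : Prop := ∀ x ∈ J.head?, x.1 = u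

/-- The journey departs at or after time `t`. -/
def departsAfter (J : List (Step V)) (t : ℕ) : Prop := ∀ x ∈ J.head?, t ≤ x.2.2

/-- Departure date of a journey started at time `t0`. -/
def departure (J : List (Step V)) (t0 : ℕ) : ℕ := (J.head?).elim t0 fun x => x.2.2

/-- Arrival date of a journey started at time `t0`. -/
def arrival (J : List (Step V)) (t0 : ℕ) : ℕ := (J.getLast?).elim t0 fun x => x.2.2 + 1

/-- Final vertex of a journey started at vertex `s`. -/
def endAt (J : List (Step V)) (s : V) : V := (J.getLast?).elim s fun x => x.2.1

/-- The journey, started at `s`, visits (covers) vertex `v`. -/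
def visits (J : List (Step V)) (s v : V) : Prop := v = s ∨ ∃ x ∈ J, x.2.1 = v

/-- A covering journey from `s` starting at time `0`: a journey that starts at `s`
and visits every vertex. -/
def IsCoveringFrom (𝒢 : TVG V) (J : List (Step V)) (s : V) : Prop :=
  𝒢.IsJourney J ∧ startsAt J s ∧ ∀ v : V, visits J s v

/-- Class `R` (recurrent edges): connected underlying graph, lifetime `ℕ`, and every
edge is available at arbitrarily late times. -/
def ClassR (𝒢 : TVG V) : Prop :=
  𝒢.G.Connected ∧ ∀ u v, 𝒢.G.Adj u v → ∀ t, ∃ t', t < t' ∧ 𝒢.avail u v t'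

/-- Class `B` (time-bounded recurrent edges): every edge is available at some time in
`[t, t + Δ)` for every `t`. -/
def ClassB (𝒢 : TVG V) (Δ : ℕ) : Prop :=
  𝒢.G.Connected ∧ ∀ u v, 𝒢.G.Adj u v → ∀ t, ∃ t', t ≤ t' ∧ t' < t + Δ ∧ 𝒢.avail u v t'

/-- Class `P` (periodic edges): the presence function is periodic with period `p`. -/
def ClassP (𝒢 : TVG V) (p : ℕ) : Prop :=
  𝒢.G.Connected ∧ ∀ u v t, 𝒢.avail u v t ↔ 𝒢.avail u v (t + p)

/-- Presence function obtained by running the given (possibly time-dependent) edge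
relations for the given durations, one block after another, starting at time `0`;
each block relation receives the local time within its block. -/
def schedAvail : List ((V → V → ℕ → Prop) × ℕ) → V → V → ℕ → Prop
  | [], _, _, _ => False
  | (r, d) :: rest, u, v, t => if t < d then r u v t else schedAvail rest u v (t - d)

end TVG

open TVG

/-! Forgetting the times of a journey leaves a walk of the underlying graph whose length is at
most the arrival time, since every step takes one time unit; this gives `L* ≤ OPT`. Conversely,
an optimal covering walk can be followed as a journey that waits less than `Δ` for each edge,
which gives `OPT ≤ Δ·L*`. -/

namespace TVG

variable {V : Type}

lemma visits_iff_mem_cons_map {J : List (Step V)} {s v : V} :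
    visits J s v ↔ v ∈ s :: J.map (fun x => x.2.1) := by
  simp [visits, eq_comm]

lemma arrival_cons (x : Step V) (J : List (Step V)) (t : ℕ) :
    arrival (x :: J) t = arrival J (x.2.2 + 1) := by
  cases J <;> simp [arrival, List.getLast?_cons]

lemma isChain_linked_cons {x : Step V} {J : List (Step V)} :
    (x :: J).IsChain Linked ↔ (startsAt J x.2.1 ∧ departsAfter J (x.2.2 + 1)) ∧ J.IsChain Linked := by
  rw [List.isChain_cons]
  simp only [Linked, startsAt, departsAfter]
  exact and_congr_left' ⟨fun h => ⟨fun y hy => (h y hy).1, fun y hy => (h y hy).2⟩,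
    fun h y hy => ⟨h.1 y hy, h.2 y hy⟩⟩

lemma isJourney_cons {𝒢 : TVG V} {x : Step V} {J : List (Step V)} :
    𝒢.IsJourney (x :: J) ↔ (𝒢.G.Adj x.1 x.2.1 ∧ 𝒢.avail x.1 x.2.1 x.2.2) ∧
      (startsAt J x.2.1 ∧ departsAfter J (x.2.2 + 1)) ∧ 𝒢.IsJourney J := by
  change _ ∧ (x :: J).IsChain Linked ↔ _ ∧ _ ∧ _ ∧ J.IsChain Linked
  rw [List.forall_mem_cons, isChain_linked_cons]
  tauto

lemma add_length_le_arrival {J : List (Step V)} (hJ : J.IsChain Linked) {t : ℕ}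
    (ht : departsAfter J t) : t + J.length ≤ arrival J t := by
  induction J generalizing t with
  | nil => simp [arrival]
  | cons x J ih =>
    obtain ⟨⟨-, hdep⟩, hJ⟩ := isChain_linked_cons.1 hJ
    have htx : t ≤ x.2.2 := ht x rfl
    have := ih hJ hdep
    rw [arrival_cons, List.length_cons]
    omega

lemma IsJourney.exists_walk {𝒢 : TVG V} {J : List (Step V)} (hJ : 𝒢.IsJourney J) {s : V}
    (hs : startsAt J s) : ∃ (w : V) (W : 𝒢.G.Walk s w),
      W.support = s :: J.map (fun x => x.2.1) ∧ W.length = J.length := by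
  induction J generalizing s with
  | nil => exact ⟨s, .nil, rfl, rfl⟩
  | cons x J ih =>
    obtain ⟨⟨hadj, -⟩, ⟨hstart, -⟩, hJ⟩ := isJourney_cons.1 hJ
    obtain ⟨w, W, hsupp, hlen⟩ := ih hJ hstart
    obtain rfl : x.1 = s := hs x rfl
    exact ⟨w, .cons hadj W, by simp [hsupp], by simp [hlen]⟩

lemma exists_journey_of_walk {𝒢 : TVG V} {Δ : ℕ}
    (hΔ : ∀ u v, 𝒢.G.Adj u v → ∀ t, ∃ t', t ≤ t' ∧ t' < t + Δ ∧ 𝒢.avail u v t')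
    {u w : V} (W : 𝒢.G.Walk u w) (t : ℕ) :
    ∃ J : List (Step V), 𝒢.IsJourney J ∧ startsAt J u ∧ departsAfter J t ∧
      u :: J.map (fun x => x.2.1) = W.support ∧ arrival J t ≤ t + Δ * W.length := by
  induction W generalizing t with
  | nil => exact ⟨[], ⟨by simp, .nil⟩, by simp [startsAt], by simp [departsAfter], rfl,
      by simp [arrival]⟩
  | @cons u x w hadj W ih =>
    obtain ⟨t', htt', ht'Δ, havail⟩ := hΔ u x hadj t
    obtain ⟨J, hJ, hstart, hdep, hsupp, harr⟩ := ih (t' + 1)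
    refine ⟨(u, x, t') :: J, isJourney_cons.2 ⟨⟨hadj, havail⟩, ⟨hstart, hdep⟩, hJ⟩,
      fun _ h => by cases h; rfl, fun _ h => by cases h; exact htt', by simp [hsupp], ?_⟩
    simp only [arrival_cons, SimpleGraph.Walk.length_cons, Nat.mul_succ]
    omega

end TVG

theorem classB_tree_delta_approx_general {V : Type} (𝒢 : TVG V) (Δ : ℕ) (hB : 𝒢.ClassB Δ)
    (s : V) (Lstar OPT : ℕ)
    (hL : IsLeast {L : ℕ | ∃ (w : V) (W : 𝒢.G.Walk s w),
        (∀ v : V, v ∈ W.support) ∧ W.length = L} Lstar)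
    (hOPT : IsLeast {t : ℕ | ∃ J, 𝒢.IsCoveringFrom J s ∧ arrival J 0 = t} OPT) :
    Lstar ≤ OPT ∧ OPT ≤ Δ * Lstar := by
  constructor
  · obtain ⟨J, ⟨hJ, hs, hcov⟩, rfl⟩ := hOPT.1
    obtain ⟨w, W, hsupp, hlen⟩ := hJ.exists_walk hs
    calc Lstar ≤ W.length :=
          hL.2 ⟨w, W, fun v => hsupp ▸ visits_iff_mem_cons_map.1 (hcov v), rfl⟩
      _ = J.length := hlen
      _ ≤ arrival J 0 := by
          simpa using add_length_le_arrival hJ.2 (fun _ _ => Nat.zero_le _)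
  · obtain ⟨w, W, hcov, rfl⟩ := hL.1
    obtain ⟨J, hJ, hs, -, hsupp, harr⟩ := exists_journey_of_walk hB.2 W 0
    calc OPT ≤ arrival J 0 :=
          hOPT.2 ⟨J, ⟨hJ, hs, fun v => visits_iff_mem_cons_map.2 (hsupp ▸ hcov v)⟩, rfl⟩
      _ ≤ Δ * W.length := by simpa using harr

/-- For a TVG of class `B` with bound `Δ` over a tree, if `L*` is the
minimal length of a covering walk of the tree from `s` and `OPT` is the minimal arrival
time of a covering journey from `s` at time `0`, then `L* ≤ OPT ≤ Δ·L*`. -/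
theorem classB_tree_delta_approx {V : Type} (𝒢 : TVG V) (Δ : ℕ) (hB : 𝒢.ClassB Δ)
    (htree : 𝒢.G.IsTree) (s : V) (Lstar OPT : ℕ)
    (hL : IsLeast {L : ℕ | ∃ (w : V) (W : 𝒢.G.Walk s w),
        (∀ v : V, v ∈ W.support) ∧ W.length = L} Lstar)
    (hOPT : IsLeast {t : ℕ | ∃ J, 𝒢.IsCoveringFrom J s ∧ arrival J 0 = t} OPT) :
    Lstar ≤ OPT ∧ OPT ≤ Δ * Lstar :=
  classB_tree_delta_approx_general 𝒢 Δ hB s Lstar OPT hL hOPT
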